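/- arXiv:1812.03053 — 6 statements merged into one kernel-verified Lean document; each statement's English description precedes it below -/
import Mathlib

section
/- Every isotropic tensor function Φ from an isotropic subset M of Sym(n) to Sym(n) is coaxial: for each X ∈ M, every eigenvector of X is an eigenvector of Φ(X). -/
open Matrix

def IsEigenvector {n : ℕ} (A : Matrix (Fin n) (Fin n) ℝ) (v : Fin n → ℝ) : Prop :=
  v ≠ 0 ∧ ∃ μ : ℝ, A.mulVec v = μ • v

def Coaxial {n : ℕ} (A B : Matrix (Fin n) (Fin n) ℝ) : Prop :=
  ∀ v : Fin n → ℝ, IsEigenvector A v → IsEigenvector B v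

def IsOrthogonal {n : ℕ} (Q : Matrix (Fin n) (Fin n) ℝ) : Prop :=
  Q * Qᵀ = 1 ∧ Qᵀ * Q = 1

/-
For an eigenvector `v` of the symmetric matrix `X`, the Householder reflection `Q` in the
hyperplane `v⊥` is orthogonal and commutes with `X`, so `Qᵀ X Q = X`. Isotropy of `Φ` then gives
`Qᵀ Φ(X) Q = Φ(X)`, i.e. `Q` commutes with `Φ(X)`. Hence `Φ(X) v` lies in the `-1`-eigenspace of
`Q`, which is the line through `v`.
-/

namespace Matrix

variable {K ι : Type*} [Field K] [Fintype ι] [DecidableEq ι]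

def householder (v : ι → K) : Matrix ι ι K :=
  1 - (2 / (v ⬝ᵥ v)) • vecMulVec v v

theorem transpose_householder (v : ι → K) : (householder v)ᵀ = householder v := by
  simp [householder, transpose_sub, transpose_smul]

theorem householder_mul_self {v : ι → K} (hv : v ⬝ᵥ v ≠ 0) :
    householder v * householder v = 1 := by
  simp only [householder, sub_mul, mul_sub, mul_one, one_mul, smul_mul_smul_comm,
    vecMulVec_mul_vecMulVec, vecMulVec_smul]
  have hc : 2 / v ⬝ᵥ v * (2 / v ⬝ᵥ v) * v ⬝ᵥ v = 2 * (2 / v ⬝ᵥ v) := by field_simp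
  rw [smul_smul, hc]
  module

theorem householder_mulVec (v w : ι → K) :
    householder v *ᵥ w = w - (2 * (v ⬝ᵥ w) / (v ⬝ᵥ v)) • v := by
  rw [householder, sub_mulVec, one_mulVec, smul_mulVec, vecMulVec_mulVec, op_smul_eq_smul,
    smul_smul, mul_div_right_comm, div_mul_eq_mul_div]

theorem householder_mulVec_self {v : ι → K} (hv : v ⬝ᵥ v ≠ 0) : householder v *ᵥ v = -v := by
  rw [householder_mulVec, mul_div_cancel_right₀ _ hv, two_smul]
  abel

theorem eq_smul_of_householder_mulVec_eq_neg [NeZero (2 : K)] {v w : ι → K}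
    (h : householder v *ᵥ w = -w) : w = ((v ⬝ᵥ w) / (v ⬝ᵥ v)) • v := by
  rw [householder_mulVec, sub_eq_iff_eq_add, eq_neg_add_iff_add_eq, ← two_smul K,
    mul_div_assoc, ← smul_smul] at h
  exact smul_right_injective _ two_ne_zero h

theorem commute_householder {X : Matrix ι ι K} {v : ι → K} {μ : K} (hX : X.IsSymm)
    (hXv : X *ᵥ v = μ • v) : Commute (householder v) X := by
  have hP : vecMulVec v v * X = X * vecMulVec v v := by
    rw [vecMulVec_mul, mul_vecMulVec, ← mulVec_transpose, hX.eq, hXv, vecMulVec_smul,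
      smul_vecMulVec]
  simp only [Commute, SemiconjBy, householder, sub_mul, mul_sub, one_mul, mul_one,
    smul_mul_assoc, mul_smul_comm, hP]

end Matrix

theorem IsOrthogonal.transpose_mul_mul_eq_iff_commute {n : ℕ} {Q : Matrix (Fin n) (Fin n) ℝ}
    (hQ : IsOrthogonal Q) (A : Matrix (Fin n) (Fin n) ℝ) : Qᵀ * A * Q = A ↔ Commute Q A := by
  constructor
  · intro h
    calc Q * A = Q * (Qᵀ * A * Q) := by rw [h]
      _ = A * Q := by rw [← mul_assoc, ← mul_assoc, hQ.1, one_mul]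
  · intro h
    rw [mul_assoc, ← h.eq, ← mul_assoc, hQ.2, one_mul]

theorem isOrthogonal_householder {n : ℕ} {v : Fin n → ℝ} (hv : v ≠ 0) :
    IsOrthogonal (householder v) := by
  have hQQ := householder_mul_self (fun h => hv (dotProduct_self_eq_zero.mp h))
  rw [IsOrthogonal, transpose_householder]
  exact ⟨hQQ, hQQ⟩

theorem isEigenvector_of_commute_householder {n : ℕ} {A : Matrix (Fin n) (Fin n) ℝ}
    {v : Fin n → ℝ} (hv : v ≠ 0) (h : Commute (householder v) A) : IsEigenvector A v := by
  refine ⟨hv, _, eq_smul_of_householder_mulVec_eq_neg ?_⟩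
  rw [mulVec_mulVec, h.eq, ← mulVec_mulVec,
    householder_mulVec_self (fun h => hv (dotProduct_self_eq_zero.mp h)), mulVec_neg]

theorem isotropic_implies_coaxial_general {n : ℕ}
    (M : Set (Matrix (Fin n) (Fin n) ℝ))
    (hMsym : ∀ X ∈ M, X.IsSymm)
    (Φ : Matrix (Fin n) (Fin n) ℝ → Matrix (Fin n) (Fin n) ℝ)
    (hΦiso : ∀ X ∈ M, ∀ Q : Matrix (Fin n) (Fin n) ℝ, IsOrthogonal Q →
      Φ (Qᵀ * X * Q) = Qᵀ * Φ X * Q) :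
    ∀ X ∈ M, Coaxial X (Φ X) := by
  intro X hX v ⟨hv, μ, hXv⟩
  have hQ := isOrthogonal_householder hv
  have hQX : Commute (householder v) X := commute_householder (hMsym X hX) hXv
  have hQΦ : Commute (householder v) (Φ X) := by
    rw [← hQ.transpose_mul_mul_eq_iff_commute, ← hΦiso X hX _ hQ,
      (hQ.transpose_mul_mul_eq_iff_commute X).2 hQX]
  exact isEigenvector_of_commute_householder hv hQΦ

/-- Every isotropic tensor function Φ : M → Sym(n) on an
isotropic set M ⊂ Sym(n) is coaxial: for each X ∈ M, every eigenvector of X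
is an eigenvector of Φ(X). -/
theorem isotropic_implies_coaxial {n : ℕ}
    (M : Set (Matrix (Fin n) (Fin n) ℝ))
    (hMsym : ∀ X ∈ M, X.IsSymm)
    (hMiso : ∀ X ∈ M, ∀ Q : Matrix (Fin n) (Fin n) ℝ, IsOrthogonal Q →
      Qᵀ * X * Q ∈ M)
    (Φ : Matrix (Fin n) (Fin n) ℝ → Matrix (Fin n) (Fin n) ℝ)
    (hΦsym : ∀ X ∈ M, (Φ X).IsSymm)
    (hΦiso : ∀ X ∈ M, ∀ Q : Matrix (Fin n) (Fin n) ℝ, IsOrthogonal Q →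
      Φ (Qᵀ * X * Q) = Qᵀ * Φ X * Q) :
    ∀ X ∈ M, Coaxial X (Φ X) :=
  isotropic_implies_coaxial_general M hMsym Φ hΦiso
end

section
/- An isotropic tensor function Φ: M → Sym(n) is bi-coaxial if and only if for every X ∈ M with eigenvalues a₁,…,aₙ and corresponding eigenvalues b₁,…,bₙ of Φ(X): aᵢ ≠ aⱼ implies bᵢ ≠ bⱼ for all i, j. -/
/-!
Both conditions are read off a common orthonormal eigenbasis. For matrices that are diagonal in
the same orthonormal basis, `Coaxial (diagonal c) (diagonal d)` says exactly that
`c k = c l → d k = d l`, so bi-coaxiality means `a k = a l ↔ b k = b l`. Isotropy provides the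
common basis and one of the two implications: conjugating by the coordinate reflections, which fix
`diagonal a`, shows that `Φ (diagonal a)` is diagonal, and conjugating by the transposition of `i`
and `j`, which fixes `diagonal a` when `a i = a j`, shows that `b i = b j`. The other implication,
`b i = b j → a i = a j`, is the stated condition.
-/

open Matrix

variable {n : ℕ}

namespace IsOrthogonal

variable {Q : Matrix (Fin n) (Fin n) ℝ}

lemma transpose (hQ : IsOrthogonal Q) : IsOrthogonal Qᵀ := by
  simpa [IsOrthogonal, and_comm] using hQ

lemma eq_transpose_mul_mul_iff (hQ : IsOrthogonal Q) {X D : Matrix (Fin n) (Fin n) ℝ} :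
    X = Qᵀ * D * Q ↔ Q * X * Qᵀ = D := by
  constructor <;> rintro rfl
  · simp [← mul_assoc, hQ.1, mul_assoc _ Q]
  · simp [← mul_assoc, hQ.2, mul_assoc _ Qᵀ]

lemma mulVec_injective (hQ : IsOrthogonal Q) : Function.Injective (Q *ᵥ ·) :=
  fun x y h => by simpa [hQ.2] using congrArg (Qᵀ *ᵥ ·) h

lemma isEigenvector_conj_iff (hQ : IsOrthogonal Q) {A : Matrix (Fin n) (Fin n) ℝ}
    {v : Fin n → ℝ} : IsEigenvector (Qᵀ * A * Q) v ↔ IsEigenvector A (Q *ᵥ v) := by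
  have hv : (Qᵀ * A * Q) *ᵥ v = Qᵀ *ᵥ (A *ᵥ (Q *ᵥ v)) := by
    simp [mulVec_mulVec, mul_assoc]
  have hμ (μ : ℝ) : μ • v = Qᵀ *ᵥ (μ • Q *ᵥ v) := by simp [mulVec_smul, hQ.2]
  simp only [IsEigenvector, hv, hμ, hQ.transpose.mulVec_injective.eq_iff,
    hQ.mulVec_injective.ne_iff' (mulVec_zero Q)]

lemma coaxial_conj_iff (hQ : IsOrthogonal Q) {A B : Matrix (Fin n) (Fin n) ℝ} :
    Coaxial (Qᵀ * A * Q) (Qᵀ * B * Q) ↔ Coaxial A B := by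
  refine ⟨fun h w hw => ?_, fun h v hv => ?_⟩
  · have hw' : Q *ᵥ (Qᵀ *ᵥ w) = w := by simp [hQ.1]
    simpa [hQ.isEigenvector_conj_iff, hw'] using h (Qᵀ *ᵥ w)
      (by rwa [hQ.isEigenvector_conj_iff, hw'])
  · rw [hQ.isEigenvector_conj_iff] at hv ⊢
    exact h _ hv

end IsOrthogonal

lemma diagonal_mulVec_eq_smul_iff {ι K : Type*} [Fintype ι] [DecidableEq ι] [Field K]
    {c v : ι → K} {μ : K} : diagonal c *ᵥ v = μ • v ↔ ∀ k, v k ≠ 0 → c k = μ := by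
  simp only [funext_iff, mulVec_diagonal, Pi.smul_apply, smul_eq_mul]
  exact forall_congr' fun k => by rw [mul_eq_mul_right_iff, or_iff_not_imp_right]

lemma coaxial_diagonal_iff {c d : Fin n → ℝ} :
    Coaxial (diagonal c) (diagonal d) ↔ ∀ k l, c k = c l → d k = d l := by
  constructor
  · intro h k l hkl
    let u : Fin n → ℝ := fun m => if m = k ∨ m = l then 1 else 0
    have hu : ∀ m, u m ≠ 0 → m = k ∨ m = l := fun m hm => by
      by_contra h
      exact hm (if_neg h)
    obtain ⟨-, μ, hμ⟩ := h u ⟨Function.ne_iff.2 ⟨k, by simp [u]⟩, c k,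
      diagonal_mulVec_eq_smul_iff.2 fun m hm => by rcases hu m hm with rfl | rfl <;> simp [hkl]⟩
    rw [diagonal_mulVec_eq_smul_iff] at hμ
    exact (hμ k (by simp [u])).trans (hμ l (by simp [u])).symm
  · rintro h v ⟨hv, μ, hμ⟩
    obtain ⟨k₀, hk₀⟩ := Function.ne_iff.1 hv
    rw [diagonal_mulVec_eq_smul_iff] at hμ
    exact ⟨hv, d k₀, diagonal_mulVec_eq_smul_iff.2 fun k hk =>
      h k k₀ ((hμ k hk).trans (hμ k₀ hk₀).symm)⟩

lemma IsOrthogonal.coaxial_conj_diagonal_iff {Q : Matrix (Fin n) (Fin n) ℝ} (hQ : IsOrthogonal Q)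
    {c d : Fin n → ℝ} :
    Coaxial (Qᵀ * diagonal c * Q) (Qᵀ * diagonal d * Q) ↔ ∀ k l, c k = c l → d k = d l :=
  hQ.coaxial_conj_iff.trans coaxial_diagonal_iff

lemma Matrix.IsSymm.exists_isOrthogonal_diagonal {X : Matrix (Fin n) (Fin n) ℝ} (hX : X.IsSymm) :
    ∃ (Q : Matrix (Fin n) (Fin n) ℝ) (a : Fin n → ℝ),
      IsOrthogonal Q ∧ X = Qᵀ * diagonal a * Q := by
  have hH : X.IsHermitian := by rwa [IsHermitian, conjTranspose_eq_transpose_of_trivial]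
  set U := hH.eigenvectorUnitary
  refine ⟨(U : Matrix (Fin n) (Fin n) ℝ)ᵀ, hH.eigenvalues, ?_, ?_⟩
  · have h₁ := mem_unitaryGroup_iff.1 U.2
    have h₂ := mem_unitaryGroup_iff'.1 U.2
    simp only [star_eq_conjTranspose, conjTranspose_eq_transpose_of_trivial] at h₁ h₂
    simpa [IsOrthogonal] using ⟨h₂, h₁⟩
  · simpa [star_eq_conjTranspose] using hH.spectral_theorem

lemma isOrthogonal_swap (i j : Fin n) : IsOrthogonal (swap ℝ i j) := by
  simp [IsOrthogonal, swap_mul_self]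

lemma swap_mul_diagonal_mul_swap {a : Fin n → ℝ} {i j : Fin n} (hij : a i = a j) :
    swap ℝ i j * diagonal a * swap ℝ i j = diagonal a := by
  have : a ∘ Equiv.swap i j = a := by
    ext k
    rcases eq_or_ne k i with rfl | hki
    · simp [hij]
    rcases eq_or_ne k j with rfl | hkj
    · simp [hij]
    · simp [Equiv.swap_apply_of_ne_of_ne hki hkj]
  simp [swap, PEquiv.toMatrix_toPEquiv_mul, PEquiv.mul_toMatrix_toPEquiv,
    submatrix_diagonal_equiv, this]

def coordReflection (i : Fin n) : Matrix (Fin n) (Fin n) ℝ :=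
  diagonal fun k => if k = i then -1 else 1

lemma isOrthogonal_coordReflection (i : Fin n) : IsOrthogonal (coordReflection i) := by
  have : coordReflection i * coordReflection i = 1 := by
    rw [coordReflection, diagonal_mul_diagonal, ← diagonal_one]
    congr 1; ext k; split_ifs <;> norm_num
  simpa [IsOrthogonal, coordReflection] using this

lemma coordReflection_conj_diagonal (i : Fin n) (a : Fin n → ℝ) :
    (coordReflection i)ᵀ * diagonal a * coordReflection i = diagonal a := by
  rw [coordReflection, diagonal_transpose, diagonal_mul_diagonal, diagonal_mul_diagonal]
  congr 1; ext k; split_ifs <;> ring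

lemma eq_diagonal_diag_of_forall_coordReflection_conj {C : Matrix (Fin n) (Fin n) ℝ}
    (h : ∀ i, (coordReflection i)ᵀ * C * coordReflection i = C) : C = diagonal C.diag := by
  ext p q
  rcases eq_or_ne p q with rfl | hpq
  · simp
  have hflip : C p q = - C p q := by
    conv_lhs => rw [← h p]
    simp [coordReflection, diagonal_mul, mul_diagonal, hpq.symm]
  rw [diagonal_apply_ne _ hpq]
  linarith

def IsIsotropicSet (M : Set (Matrix (Fin n) (Fin n) ℝ)) : Prop :=
  ∀ X ∈ M, ∀ Q : Matrix (Fin n) (Fin n) ℝ, IsOrthogonal Q → Qᵀ * X * Q ∈ M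

def IsIsotropicOn (Φ : Matrix (Fin n) (Fin n) ℝ → Matrix (Fin n) (Fin n) ℝ)
    (M : Set (Matrix (Fin n) (Fin n) ℝ)) : Prop :=
  ∀ X ∈ M, ∀ Q : Matrix (Fin n) (Fin n) ℝ, IsOrthogonal Q →
    Φ (Qᵀ * X * Q) = Qᵀ * Φ X * Q

section Isotropic

variable {M : Set (Matrix (Fin n) (Fin n) ℝ)}
  {Φ : Matrix (Fin n) (Fin n) ℝ → Matrix (Fin n) (Fin n) ℝ}
  {X Q : Matrix (Fin n) (Fin n) ℝ} {a b : Fin n → ℝ}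

lemma IsIsotropicSet.mul_mul_transpose_mem (hM : IsIsotropicSet M) (hX : X ∈ M)
    (hQ : IsOrthogonal Q) : Q * X * Qᵀ ∈ M := by
  simpa using hM X hX Qᵀ hQ.transpose

lemma IsIsotropicOn.map_mul_mul_transpose (hΦ : IsIsotropicOn Φ M) (hX : X ∈ M)
    (hQ : IsOrthogonal Q) : Φ (Q * X * Qᵀ) = Q * Φ X * Qᵀ := by
  simpa using hΦ X hX Qᵀ hQ.transpose

lemma IsIsotropicOn.map_diagonal_eq_diagonal_diag (hΦ : IsIsotropicOn Φ M)
    (ha : diagonal a ∈ M) :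
    Φ (diagonal a) = diagonal (Φ (diagonal a)).diag :=
  eq_diagonal_diag_of_forall_coordReflection_conj fun i => by
    rw [← hΦ _ ha _ (isOrthogonal_coordReflection i), coordReflection_conj_diagonal]

lemma IsIsotropicOn.apply_eq_apply_of_map_diagonal (hΦ : IsIsotropicOn Φ M)
    (ha : diagonal a ∈ M) (hb : Φ (diagonal a) = diagonal b) {i j : Fin n}
    (hij : a i = a j) : b i = b j := by
  have h := hΦ _ ha _ (isOrthogonal_swap i j)
  rw [transpose_swap, swap_mul_diagonal_mul_swap hij, hb] at h
  simpa only [mul_swap_apply_left, swap_mul_apply_left, diagonal_apply_eq] using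
    congrFun (congrFun h i) i

lemma IsIsotropicOn.eigenvalue_eq_of_eq (hM : IsIsotropicSet M) (hΦ : IsIsotropicOn Φ M)
    (hX : X ∈ M) (hQ : IsOrthogonal Q) (hXa : X = Qᵀ * diagonal a * Q)
    (hXb : Φ X = Qᵀ * diagonal b * Q) {i j : Fin n} (hij : a i = a j) : b i = b j := by
  rw [hQ.eq_transpose_mul_mul_iff] at hXa hXb
  refine hΦ.apply_eq_apply_of_map_diagonal (hXa ▸ hM.mul_mul_transpose_mem hX hQ) ?_ hij
  rw [← hXa, hΦ.map_mul_mul_transpose hX hQ, hXb]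

lemma IsIsotropicOn.exists_simultaneous_diagonal (hMsym : ∀ X ∈ M, X.IsSymm)
    (hM : IsIsotropicSet M) (hΦ : IsIsotropicOn Φ M) (hX : X ∈ M) :
    ∃ (Q : Matrix (Fin n) (Fin n) ℝ) (a b : Fin n → ℝ), IsOrthogonal Q ∧
      X = Qᵀ * diagonal a * Q ∧ Φ X = Qᵀ * diagonal b * Q := by
  obtain ⟨Q, a, hQ, hXa⟩ := (hMsym X hX).exists_isOrthogonal_diagonal
  have hD := hQ.eq_transpose_mul_mul_iff.1 hXa
  have ha : diagonal a ∈ M := hD ▸ hM.mul_mul_transpose_mem hX hQ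
  refine ⟨Q, a, (Φ (diagonal a)).diag, hQ, hXa, hQ.eq_transpose_mul_mul_iff.2 ?_⟩
  rw [← hΦ.map_mul_mul_transpose hX hQ, hD]
  exact hΦ.map_diagonal_eq_diagonal_diag ha

end Isotropic

theorem isotropic_bicoaxial_iff_general {n : ℕ}
    (M : Set (Matrix (Fin n) (Fin n) ℝ))
    (hMsym : ∀ X ∈ M, X.IsSymm)
    (hMiso : ∀ X ∈ M, ∀ Q : Matrix (Fin n) (Fin n) ℝ, IsOrthogonal Q →
      Qᵀ * X * Q ∈ M)
    (Φ : Matrix (Fin n) (Fin n) ℝ → Matrix (Fin n) (Fin n) ℝ)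
    (hΦiso : ∀ X ∈ M, ∀ Q : Matrix (Fin n) (Fin n) ℝ, IsOrthogonal Q →
      Φ (Qᵀ * X * Q) = Qᵀ * Φ X * Q) :
    (∀ X ∈ M, Coaxial X (Φ X) ∧ Coaxial (Φ X) X) ↔
    (∀ X ∈ M, ∀ Q : Matrix (Fin n) (Fin n) ℝ, IsOrthogonal Q →
      ∀ a b : Fin n → ℝ,
        X = Qᵀ * Matrix.diagonal a * Q → Φ X = Qᵀ * Matrix.diagonal b * Q →
          ∀ i j : Fin n, a i ≠ a j → b i ≠ b j) := by
  have hM : IsIsotropicSet M := hMiso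
  have hΦ : IsIsotropicOn Φ M := hΦiso
  constructor
  · intro hco X hX Q hQ a b hXa hXb i j hne hb
    have hXΦ := (hco X hX).2
    rw [hXb, hXa] at hXΦ
    exact hne (hQ.coaxial_conj_diagonal_iff.1 hXΦ i j hb)
  · intro hsep X hX
    obtain ⟨Q, a, b, hQ, hXa, hXb⟩ := hΦ.exists_simultaneous_diagonal hMsym hM hX
    rw [hXb, hXa]
    exact ⟨hQ.coaxial_conj_diagonal_iff.2 fun _ _ => hΦ.eigenvalue_eq_of_eq hM hX hQ hXa hXb,
      hQ.coaxial_conj_diagonal_iff.2 fun k l => not_imp_not.1 (hsep X hX Q hQ a b hXa hXb k l)⟩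

/-- An isotropic tensor function Φ : M → Sym(n) is bi-coaxial
iff, for every X ∈ M and every simultaneous diagonalization
X = Qᵀ diag(a) Q, Φ(X) = Qᵀ diag(b) Q (so that bᵢ is the eigenvalue of Φ(X)
corresponding to the eigenvalue aᵢ of X), we have aᵢ ≠ aⱼ ⟹ bᵢ ≠ bⱼ. -/
theorem isotropic_bicoaxial_iff {n : ℕ}
    (M : Set (Matrix (Fin n) (Fin n) ℝ))
    (hMsym : ∀ X ∈ M, X.IsSymm)
    (hMiso : ∀ X ∈ M, ∀ Q : Matrix (Fin n) (Fin n) ℝ, IsOrthogonal Q →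
      Qᵀ * X * Q ∈ M)
    (Φ : Matrix (Fin n) (Fin n) ℝ → Matrix (Fin n) (Fin n) ℝ)
    (hΦsym : ∀ X ∈ M, (Φ X).IsSymm)
    (hΦiso : ∀ X ∈ M, ∀ Q : Matrix (Fin n) (Fin n) ℝ, IsOrthogonal Q →
      Φ (Qᵀ * X * Q) = Qᵀ * Φ X * Q) :
    (∀ X ∈ M, Coaxial X (Φ X) ∧ Coaxial (Φ X) X) ↔
    (∀ X ∈ M, ∀ Q : Matrix (Fin n) (Fin n) ℝ, IsOrthogonal Q →
      ∀ a b : Fin n → ℝ,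
        X = Qᵀ * Matrix.diagonal a * Q → Φ X = Qᵀ * Matrix.diagonal b * Q →
          ∀ i j : Fin n, a i ≠ a j → b i ≠ b j) :=
  isotropic_bicoaxial_iff_general M hMsym hMiso Φ hΦiso
end

section
/- A tensor function Φ: M → Sym(n) on an isotropic set M is coaxial if and only if there exist scalar-valued functions γ₀,…,γ_{n−1} on M with Φ(X) = γ₀(X) I + γ₁(X) X + ⋯ + γ_{n−1}(X) X^{n−1} for all X ∈ M. -/
open Matrix

/-!
A symmetric matrix `X` has an eigenbasis `bᵢ` with eigenvalues `μᵢ`. If `Φ X` is coaxial to `X`,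
each `bᵢ` is an eigenvector of `Φ X`, say with eigenvalue `νᵢ`, and `μᵢ = μⱼ` forces `νᵢ = νⱼ`
because `bᵢ + bⱼ` is then also an eigenvector of `X`. So `ν` factors through `μ`, and the
Lagrange interpolation polynomial `p` of `μᵢ ↦ νᵢ`, of degree `< n`, satisfies `Φ X = p(X)` since
both sides agree on the eigenbasis. Conversely, every eigenvector of `X` is one of `p(X)`.
-/

open Polynomial

theorem Matrix.aeval_mulVec_of_mulVec_eq_smul {ι R : Type*} [CommRing R] [Fintype ι]
    [DecidableEq ι] {A : Matrix ι ι R} {v : ι → R} {μ : R} (h : A *ᵥ v = μ • v) (p : R[X]) :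
    aeval A p *ᵥ v = p.eval μ • v := by
  simpa only [aeval_algHom_apply, toLinAlgEquiv'_apply, toLin'_apply] using
    Module.End.aeval_apply_of_mem_apply_eq_smul (f := toLinAlgEquiv' A) (p := p) h

theorem Polynomial.aeval_eq_sum_fin {R A : Type*} [CommSemiring R] [Semiring A] [Algebra R A]
    {p : R[X]} {n : ℕ} (hp : p.degree < n) (x : A) :
    aeval x p = ∑ k : Fin n, p.coeff k • x ^ (k : ℕ) := by
  rw [aeval_def, eval₂_eq_sum, ← sum_fin _ (by simp) hp]
  simp only [Algebra.smul_def]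

theorem Polynomial.exists_degree_lt_card_eval_eq {ι K : Type*} [Field K] [Fintype ι]
    (μ ν : ι → K) (h : ∀ i j, μ i = μ j → ν i = ν j) :
    ∃ p : K[X], p.degree < Fintype.card ι ∧ ∀ i, p.eval (μ i) = ν i := by
  classical
  obtain ⟨s, -, hinj, hs⟩ := Finset.exists_subset_injOn_image_eq_of_surjOn
    Set.univ (Finset.univ.image μ) fun x hx => by simpa using hx
  refine ⟨Lagrange.interpolate s μ ν, ?_, fun i => ?_⟩
  · calc (Lagrange.interpolate s μ ν).degree < s.card := Lagrange.degree_interpolate_lt _ hinj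
      _ ≤ Fintype.card ι := by exact_mod_cast s.card_le_univ
  · obtain ⟨j, hj, hji⟩ : ∃ j ∈ s, μ j = μ i := Finset.mem_image.mp (hs ▸ by simp)
    rw [← hji, Lagrange.eval_interpolate_at_node _ hinj hj, h j i hji]

theorem Matrix.IsHermitian.exists_basis_mulVec_eq_smul {ι : Type*} [Fintype ι] [DecidableEq ι]
    {A : Matrix ι ι ℝ} (hA : A.IsHermitian) :
    ∃ b : Module.Basis ι ℝ (ι → ℝ), ∀ i, A *ᵥ b i = hA.eigenvalues i • b i :=
  ⟨hA.eigenvectorBasis.toBasis.map (WithLp.linearEquiv 2 ℝ (ι → ℝ)), fun i => by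
    simpa using hA.mulVec_eigenvectorBasis i⟩

theorem Coaxial.eq_of_mulVec_eq_smul {n : ℕ} {ι : Type*} {A B : Matrix (Fin n) (Fin n) ℝ}
    (h : Coaxial A B) (b : Module.Basis ι ℝ (Fin n → ℝ)) {i j : ι} (hij : i ≠ j) {μ α β : ℝ}
    (hAi : A *ᵥ b i = μ • b i) (hAj : A *ᵥ b j = μ • b j)
    (hBi : B *ᵥ b i = α • b i) (hBj : B *ᵥ b j = β • b j) : α = β := by
  have hne : b i + b j ≠ 0 := fun h0 => by
    simpa [hij] using congr(b.repr $h0 i)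
  obtain ⟨-, l, hl⟩ := h _ ⟨hne, μ, by rw [mulVec_add, hAi, hAj, smul_add]⟩
  rw [mulVec_add, hBi, hBj, smul_add] at hl
  have hi := congr(b.repr $hl i)
  have hj := congr(b.repr $hl j)
  simp [hij, Ne.symm hij] at hi hj
  rw [hi, hj]

theorem Coaxial.exists_aeval_eq {n : ℕ} {ι : Type*} [Fintype ι] {A B : Matrix (Fin n) (Fin n) ℝ}
    (h : Coaxial A B) (b : Module.Basis ι ℝ (Fin n → ℝ)) (μ : ι → ℝ)
    (hb : ∀ i, A *ᵥ b i = μ i • b i) :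
    ∃ p : ℝ[X], p.degree < Fintype.card ι ∧ B = aeval A p := by
  classical
  choose ν hν using fun i => (h (b i) ⟨b.ne_zero i, μ i, hb i⟩).2
  have hν_wd (i j : ι) (hμ : μ i = μ j) : ν i = ν j := by
    rcases eq_or_ne i j with rfl | hij
    · rfl
    · exact h.eq_of_mulVec_eq_smul b hij (hb i) (hμ ▸ hb j) (hν i) (hν j)
  obtain ⟨p, hdeg, hp⟩ := exists_degree_lt_card_eval_eq μ ν hν_wd
  refine ⟨p, hdeg, toLin'.injective (b.ext fun i => ?_)⟩
  rw [toLin'_apply, toLin'_apply, hν, aeval_mulVec_of_mulVec_eq_smul (hb i), hp]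

theorem coaxial_aeval {n : ℕ} (A : Matrix (Fin n) (Fin n) ℝ) (p : ℝ[X]) : Coaxial A (aeval A p) :=
  fun _ ⟨hv, μ, hμ⟩ => ⟨hv, p.eval μ, aeval_mulVec_of_mulVec_eq_smul hμ p⟩

theorem coaxial_iff_polynomial_representation_general {n : ℕ}
    (M : Set (Matrix (Fin n) (Fin n) ℝ))
    (hMsym : ∀ X ∈ M, X.IsSymm)
    (Φ : Matrix (Fin n) (Fin n) ℝ → Matrix (Fin n) (Fin n) ℝ) :
    (∀ X ∈ M, Coaxial X (Φ X)) ↔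
    (∃ γ : Fin n → (Matrix (Fin n) (Fin n) ℝ → ℝ),
      ∀ X ∈ M, Φ X = ∑ k : Fin n, γ k X • X ^ (k : ℕ)) := by
  constructor
  · intro hcoax
    have hpoly (X) (hX : X ∈ M) : ∃ p : ℝ[X], p.degree < n ∧ Φ X = aeval X p := by
      have hherm : X.IsHermitian := isHermitian_iff_isSymm.mpr (hMsym X hX)
      obtain ⟨b, hb⟩ := hherm.exists_basis_mulVec_eq_smul
      simpa using (hcoax X hX).exists_aeval_eq b _ hb
    choose! p hdeg hp using hpoly
    exact ⟨fun k X => (p X).coeff k, fun X hX => by rw [hp X hX, aeval_eq_sum_fin (hdeg X hX)]⟩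
  · rintro ⟨γ, hγ⟩ X hX
    have hΦX : Φ X = aeval X (∑ k : Fin n, monomial k (γ k X)) := by
      simp [hγ X hX, aeval_monomial, Algebra.smul_def]
    exact hΦX ▸ coaxial_aeval X _

/-- A tensor function Φ : M → Sym(n) on an isotropic set
M ⊂ Sym(n) is coaxial iff there are scalar-valued functions γ₀,…,γ_{n−1}
with Φ(X) = ∑_{k=0}^{n-1} γₖ(X) Xᵏ for all X ∈ M. -/
theorem coaxial_iff_polynomial_representation {n : ℕ}
    (M : Set (Matrix (Fin n) (Fin n) ℝ))
    (hMsym : ∀ X ∈ M, X.IsSymm)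
    (hMiso : ∀ X ∈ M, ∀ Q : Matrix (Fin n) (Fin n) ℝ, IsOrthogonal Q →
      Qᵀ * X * Q ∈ M)
    (Φ : Matrix (Fin n) (Fin n) ℝ → Matrix (Fin n) (Fin n) ℝ)
    (hΦsym : ∀ X ∈ M, (Φ X).IsSymm) :
    (∀ X ∈ M, Coaxial X (Φ X)) ↔
    (∃ γ : Fin n → (Matrix (Fin n) (Fin n) ℝ → ℝ),
      ∀ X ∈ M, Φ X = ∑ k : Fin n, γ k X • X ^ (k : ℕ)) :=
  coaxial_iff_polynomial_representation_general M hMsym Φ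
end

section
/- If M ⊂ PSym(n) (positive-definite symmetric matrices) is an isotropic set and Φ: M → Sym(n) is isotropic, then there exist scalar-valued functions β_{−1}, β₀, …, β_{n−2} depending on the matrix invariants of X such that Φ(X) = β_{−1} X^{−1} + β₀ I + β₁ X + ⋯ + β_{n−2} X^{n−2} for all X ∈ M. -/
/-!
Diagonalise `X` as `Qᵀ X Q = D`. Every orthogonal matrix fixing `D` under conjugation also
fixes `Φ D`; sign changes show that `Φ D` is diagonal, and transpositions of equal eigenvalues
show that its diagonal entries are a function of the eigenvalues, so Lagrange interpolation
gives `Φ D = p(D)` and hence `Φ X = p(X)`. By Cayley–Hamilton, `X p(X) = r(X)` with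
`deg r < n`, so `Φ X = X⁻¹ r(X)` is a combination of `X⁻¹, 1, X, …, X^{n-2}`. Choosing the
coefficients from the set of all such representations, which is the same for `X` and
`Qᵀ X Q`, makes them isotropic.
-/

open Matrix

open Polynomial

namespace IsOrthogonal

variable {n : ℕ} {Q : Matrix (Fin n) (Fin n) ℝ}

theorem transpose_mem_unitaryGroup (hQ : IsOrthogonal Q) : Qᵀ ∈ unitaryGroup (Fin n) ℝ := by
  rw [mem_unitaryGroup_iff, star_eq_conjTranspose, conjTranspose_eq_transpose_of_trivial,
    transpose_transpose]
  exact hQ.2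

noncomputable def conjAlgEquiv (hQ : IsOrthogonal Q) :
    Matrix (Fin n) (Fin n) ℝ ≃ₐ[ℝ] Matrix (Fin n) (Fin n) ℝ :=
  (Unitary.conjStarAlgAut ℝ _ ⟨Qᵀ, hQ.transpose_mem_unitaryGroup⟩).toAlgEquiv

theorem conjAlgEquiv_apply (hQ : IsOrthogonal Q) (X : Matrix (Fin n) (Fin n) ℝ) :
    hQ.conjAlgEquiv X = Qᵀ * X * Q := by
  simp [conjAlgEquiv, star_eq_conjTranspose]

theorem conj_inv (hQ : IsOrthogonal Q) (X : Matrix (Fin n) (Fin n) ℝ) :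
    (Qᵀ * X * Q)⁻¹ = Qᵀ * X⁻¹ * Q := by
  rw [Matrix.mul_inv_rev, Matrix.mul_inv_rev, inv_eq_left_inv hQ.2, inv_eq_left_inv hQ.1,
    Matrix.mul_assoc]

end IsOrthogonal

theorem Matrix.IsHermitian.exists_isOrthogonal_conj_eq_diagonal {n : ℕ}
    {X : Matrix (Fin n) (Fin n) ℝ} (hX : X.IsHermitian) :
    ∃ Q, IsOrthogonal Q ∧ ∃ d, Qᵀ * X * Q = diagonal d := by
  set U : Matrix (Fin n) (Fin n) ℝ := (hX.eigenvectorUnitary : Matrix (Fin n) (Fin n) ℝ)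
  have hstar : star U = Uᵀ := by
    rw [star_eq_conjTranspose, conjTranspose_eq_transpose_of_trivial]
  refine ⟨U, ⟨?_, ?_⟩, hX.eigenvalues, ?_⟩
  · rw [← hstar]; exact Unitary.mul_star_self_of_mem hX.eigenvectorUnitary.2
  · rw [← hstar]; exact Unitary.star_mul_self_of_mem hX.eigenvectorUnitary.2
  · rw [← hstar]; simpa using hX.conjStarAlgAut_star_eigenvectorUnitary

theorem Matrix.aeval_diagonal {ι R : Type*} [Fintype ι] [DecidableEq ι] [CommRing R]
    (d : ι → R) (p : R[X]) : aeval (diagonal d) p = diagonal fun i => p.eval (d i) := by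
  rw [← diagonalAlgHom_apply (R := R), aeval_algHom_apply, aeval_pi_apply]
  simp

theorem Polynomial.exists_eval_eq_of_factorsThrough {ι K : Type*} [Fintype ι] [Field K]
    {d f : ι → K} (hf : f.FactorsThrough d) : ∃ p : K[X], ∀ i, p.eval (d i) = f i := by
  classical
  refine ⟨Lagrange.interpolate (Finset.univ.image d) id (Function.extend d f 0), fun i => ?_⟩
  rw [← id_eq (d i), Lagrange.eval_interpolate_at_node _ Function.injective_id.injOn
    (Finset.mem_image_of_mem d (Finset.mem_univ i)), hf.extend_apply]

theorem Matrix.inv_mul_aeval_eq {ι R : Type*} [Fintype ι] [DecidableEq ι] [CommRing R]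
    {X : Matrix ι ι R} (hX : IsUnit X.det) {r : R[X]} {N : ℕ} (hr : r.natDegree < N + 1) :
    X⁻¹ * aeval X r = r.coeff 0 • X⁻¹ + ∑ k ∈ Finset.range N, r.coeff (k + 1) • X ^ k := by
  rw [aeval_eq_sum_range' hr, Finset.sum_range_succ', Matrix.mul_add, Matrix.mul_sum, add_comm]
  congr 1
  · simp
  · refine Finset.sum_congr rfl fun k _ => ?_
    rw [mul_smul_comm, pow_succ', ← Matrix.mul_assoc, nonsing_inv_mul X hX, Matrix.one_mul]

section StabilizerInvariant

variable {n : ℕ}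

theorem isOrthogonal_diagonal {s : Fin n → ℝ} (hs : ∀ i, s i * s i = 1) :
    IsOrthogonal (diagonal s) := by
  have h : diagonal s * diagonal s = 1 := by
    rw [diagonal_mul_diagonal, ← diagonal_one]
    exact congrArg diagonal (funext hs)
  exact ⟨by rwa [diagonal_transpose], by rwa [diagonal_transpose]⟩

theorem Equiv.Perm.isOrthogonal_permMatrix (σ : Equiv.Perm (Fin n)) :
    IsOrthogonal (σ.permMatrix ℝ) := by
  simp [IsOrthogonal, transpose_permMatrix, ← permMatrix_mul]

theorem Equiv.Perm.transpose_permMatrix_mul_mul_permMatrix (σ : Equiv.Perm (Fin n))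
    (A : Matrix (Fin n) (Fin n) ℝ) :
    (σ.permMatrix ℝ)ᵀ * A * σ.permMatrix ℝ = A.submatrix σ.symm σ.symm := by
  rw [transpose_permMatrix, Equiv.Perm.permMatrix, Equiv.Perm.permMatrix,
    PEquiv.toMatrix_toPEquiv_mul, PEquiv.mul_toMatrix_toPEquiv, submatrix_submatrix]
  rfl

def IsStabilizerInvariant (D F : Matrix (Fin n) (Fin n) ℝ) : Prop :=
  ∀ Q, IsOrthogonal Q → Qᵀ * D * Q = D → Qᵀ * F * Q = F

variable {d : Fin n → ℝ} {F : Matrix (Fin n) (Fin n) ℝ}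

theorem IsStabilizerInvariant.apply_eq_zero (hF : IsStabilizerInvariant (diagonal d) F)
    {i j : Fin n} (hij : i ≠ j) : F i j = 0 := by
  set s : Fin n → ℝ := Function.update 1 i (-1)
  have hs : ∀ t, s t * s t = 1 := fun t => by
    by_cases h : t = i <;> simp [s, h]
  have hfix : (diagonal s)ᵀ * diagonal d * diagonal s = diagonal d := by
    rw [diagonal_transpose, diagonal_mul_diagonal, diagonal_mul_diagonal]
    exact congrArg diagonal (funext fun t => by linear_combination d t * hs t)
  have h := congrFun₂ (hF _ (isOrthogonal_diagonal hs) hfix) i j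
  rw [diagonal_transpose, mul_diagonal, diagonal_mul] at h
  simp [s, hij.symm] at h
  linarith

theorem IsStabilizerInvariant.diag_eq (hF : IsStabilizerInvariant (diagonal d) F)
    {i j : Fin n} (hij : d i = d j) : F i i = F j j := by
  set σ := Equiv.swap i j
  have hfix : (σ.permMatrix ℝ)ᵀ * diagonal d * σ.permMatrix ℝ = diagonal d := by
    rw [σ.transpose_permMatrix_mul_mul_permMatrix, submatrix_diagonal_equiv]
    congr 1
    ext t
    simp only [Function.comp_apply, σ, Equiv.symm_swap]
    rcases eq_or_ne t i with rfl | hti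
    · simp [hij]
    rcases eq_or_ne t j with rfl | htj
    · simp [hij]
    · rw [Equiv.swap_apply_of_ne_of_ne hti htj]
  have h := congrFun₂ (hF _ σ.isOrthogonal_permMatrix hfix) j j
  rw [σ.transpose_permMatrix_mul_mul_permMatrix] at h
  simpa [σ] using h

theorem IsStabilizerInvariant.exists_eq_aeval (hF : IsStabilizerInvariant (diagonal d) F) :
    ∃ p : ℝ[X], F = aeval (diagonal d) p := by
  obtain ⟨p, hp⟩ := exists_eval_eq_of_factorsThrough (f := fun i => F i i)
    fun i j hij => hF.diag_eq hij
  refine ⟨p, ?_⟩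
  ext i j
  rw [aeval_diagonal]
  rcases eq_or_ne i j with rfl | hij
  · simp [hp]
  · rw [hF.apply_eq_zero hij, diagonal_apply_ne _ hij]

end StabilizerInvariant

theorem exists_aeval_eq_of_isotropic {n : ℕ} {M : Set (Matrix (Fin n) (Fin n) ℝ)}
    (hMiso : ∀ X ∈ M, ∀ Q : Matrix (Fin n) (Fin n) ℝ, IsOrthogonal Q → Qᵀ * X * Q ∈ M)
    {Φ : Matrix (Fin n) (Fin n) ℝ → Matrix (Fin n) (Fin n) ℝ}
    (hΦiso : ∀ X ∈ M, ∀ Q : Matrix (Fin n) (Fin n) ℝ, IsOrthogonal Q →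
      Φ (Qᵀ * X * Q) = Qᵀ * Φ X * Q)
    {X : Matrix (Fin n) (Fin n) ℝ} (hX : X ∈ M) (hXh : X.IsHermitian) :
    ∃ p : ℝ[X], Φ X = aeval X p := by
  obtain ⟨Q, hQ, d, hXd⟩ := hXh.exists_isOrthogonal_conj_eq_diagonal
  have hdM : diagonal d ∈ M := hXd ▸ hMiso X hX Q hQ
  obtain ⟨p, hp⟩ := IsStabilizerInvariant.exists_eq_aeval (F := Φ (diagonal d))
    fun R hR hRd => by rw [← hΦiso _ hdM R hR, hRd]
  refine ⟨p, hQ.conjAlgEquiv.injective ?_⟩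
  rw [← aeval_algHom_apply, hQ.conjAlgEquiv_apply, hQ.conjAlgEquiv_apply, hXd, ← hp, ← hXd,
    hΦiso X hX Q hQ]

noncomputable def laurentComb {n : ℕ} (c : ℤ → ℝ) (X : Matrix (Fin n) (Fin n) ℝ) :
    Matrix (Fin n) (Fin n) ℝ :=
  c (-1) • X⁻¹ + ∑ k ∈ Finset.range (n - 1), c k • X ^ k

theorem IsOrthogonal.conjAlgEquiv_laurentComb {n : ℕ} {Q : Matrix (Fin n) (Fin n) ℝ}
    (hQ : IsOrthogonal Q) (c : ℤ → ℝ) (X : Matrix (Fin n) (Fin n) ℝ) :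
    hQ.conjAlgEquiv (laurentComb c X) = laurentComb c (Qᵀ * X * Q) := by
  simp only [laurentComb, map_add, map_smul, map_sum, map_pow]
  simp only [hQ.conjAlgEquiv_apply, hQ.conj_inv]

theorem exists_aeval_eq_laurentComb {n : ℕ} {X : Matrix (Fin n) (Fin n) ℝ} (hX : IsUnit X.det)
    (p : ℝ[X]) : ∃ c : ℤ → ℝ, aeval X p = laurentComb c X := by
  cases n with
  | zero => exact ⟨0, Subsingleton.elim _ _⟩
  | succ m =>
    set r := (Polynomial.X * p) %ₘ X.charpoly
    have hr : r.natDegree < m + 1 := by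
      simpa using natDegree_modByMonic_lt _ X.charpoly_monic
        fun h => by simpa [h] using X.charpoly_natDegree_eq_dim
    refine ⟨fun k => r.coeff (k + 1).toNat, ?_⟩
    calc aeval X p = X⁻¹ * aeval X (Polynomial.X * p) := by
          rw [map_mul, aeval_X, ← Matrix.mul_assoc, nonsing_inv_mul X hX, Matrix.one_mul]
      _ = X⁻¹ * aeval X r := by rw [aeval_eq_aeval_mod_charpoly]
      _ = laurentComb _ X := by rw [inv_mul_aeval_eq hX hr, laurentComb]; simp

noncomputable def laurentCoeffs {n : ℕ}
    (Φ : Matrix (Fin n) (Fin n) ℝ → Matrix (Fin n) (Fin n) ℝ) (X : Matrix (Fin n) (Fin n) ℝ) :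
    ℤ → ℝ :=
  Classical.epsilon fun c => Φ X = laurentComb c X

theorem laurentCoeffs_conj {n : ℕ}
    {Φ : Matrix (Fin n) (Fin n) ℝ → Matrix (Fin n) (Fin n) ℝ} {X Q : Matrix (Fin n) (Fin n) ℝ}
    (hQ : IsOrthogonal Q) (hΦ : Φ (Qᵀ * X * Q) = Qᵀ * Φ X * Q) :
    laurentCoeffs Φ (Qᵀ * X * Q) = laurentCoeffs Φ X := by
  unfold laurentCoeffs
  congr 1
  funext c
  rw [hΦ, ← hQ.conjAlgEquiv_laurentComb, ← hQ.conjAlgEquiv_apply,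
    hQ.conjAlgEquiv.injective.eq_iff]

theorem isotropic_on_posdef_representation_general {n : ℕ}
    (M : Set (Matrix (Fin n) (Fin n) ℝ))
    (hMpsym : ∀ X ∈ M, X.IsSymm ∧ X.PosDef)
    (hMiso : ∀ X ∈ M, ∀ Q : Matrix (Fin n) (Fin n) ℝ, IsOrthogonal Q →
      Qᵀ * X * Q ∈ M)
    (Φ : Matrix (Fin n) (Fin n) ℝ → Matrix (Fin n) (Fin n) ℝ)
    (hΦiso : ∀ X ∈ M, ∀ Q : Matrix (Fin n) (Fin n) ℝ, IsOrthogonal Q →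
      Φ (Qᵀ * X * Q) = Qᵀ * Φ X * Q) :
    ∃ β : ℤ → (Matrix (Fin n) (Fin n) ℝ → ℝ),
      (∀ k : ℤ, ∀ X ∈ M, ∀ Q : Matrix (Fin n) (Fin n) ℝ, IsOrthogonal Q →
        β k (Qᵀ * X * Q) = β k X) ∧
      ∀ X ∈ M, Φ X = β (-1) X • X⁻¹ +
        ∑ k ∈ Finset.range (n - 1), β k X • X ^ k := by
  refine ⟨fun k X => laurentCoeffs Φ X k,
    fun k X hX Q hQ => congrFun (laurentCoeffs_conj hQ (hΦiso X hX Q hQ)) k, fun X hX => ?_⟩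
  have hXpd := (hMpsym X hX).2
  obtain ⟨p, hp⟩ := exists_aeval_eq_of_isotropic hMiso hΦiso hX hXpd.1
  obtain ⟨c, hc⟩ := exists_aeval_eq_laurentComb ((isUnit_iff_isUnit_det X).mp hXpd.isUnit) p
  exact Classical.epsilon_spec (p := fun c => Φ X = laurentComb c X) ⟨c, hp.trans hc⟩

/-- If M ⊂ PSym(n) is an isotropic set and Φ : M → Sym(n) is
isotropic, then there exist scalar functions β₋₁, β₀, …, β_{n−2} depending
only on the matrix invariants of X (invariant under X ↦ Qᵀ X Q) with
Φ(X) = β₋₁(X) X⁻¹ + ∑_{k=0}^{n-2} βₖ(X) Xᵏ for all X ∈ M. -/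
theorem isotropic_on_posdef_representation {n : ℕ}
    (M : Set (Matrix (Fin n) (Fin n) ℝ))
    (hMpsym : ∀ X ∈ M, X.IsSymm ∧ X.PosDef)
    (hMiso : ∀ X ∈ M, ∀ Q : Matrix (Fin n) (Fin n) ℝ, IsOrthogonal Q →
      Qᵀ * X * Q ∈ M)
    (Φ : Matrix (Fin n) (Fin n) ℝ → Matrix (Fin n) (Fin n) ℝ)
    (hΦsym : ∀ X ∈ M, (Φ X).IsSymm)
    (hΦiso : ∀ X ∈ M, ∀ Q : Matrix (Fin n) (Fin n) ℝ, IsOrthogonal Q →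
      Φ (Qᵀ * X * Q) = Qᵀ * Φ X * Q) :
    ∃ β : ℤ → (Matrix (Fin n) (Fin n) ℝ → ℝ),
      (∀ k : ℤ, ∀ X ∈ M, ∀ Q : Matrix (Fin n) (Fin n) ℝ, IsOrthogonal Q →
        β k (Qᵀ * X * Q) = β k X) ∧
      ∀ X ∈ M, Φ X = β (-1) X • X⁻¹ +
        ∑ k ∈ Finset.range (n - 1), β k X • X ^ k :=
  isotropic_on_posdef_representation_general M hMpsym hMiso Φ hΦiso
end

section
/- The isotropic function σ̂(B) = dev₃ B = B − (1/3) tr(B) I on PSym(3) satisfies the strict Baker–Ericksen inequalities and is semi-invertible (indeed B = (1/3) tr(B) I + σ̂(B)), but it is not injective (σ̂(I) = σ̂(0·I + anything proportional to identity) collapses all multiples of I to 0). -/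
open Matrix

/-- PSym(3): positive-definite symmetric real 3×3 matrices. -/
def PSym3 : Set (Matrix (Fin 3) (Fin 3) ℝ) := {B | B.IsSymm ∧ B.PosDef}

/-- The deviatoric part: dev₃ B = B − (1/3) tr(B) I. -/
noncomputable def dev3 (B : Matrix (Fin 3) (Fin 3) ℝ) : Matrix (Fin 3) (Fin 3) ℝ :=
  B - ((1 / 3 : ℝ) * B.trace) • 1

/-- σ̂ is semi-invertible: B = ψ₀ I + ψ₁ σ̂(B) + ψ₂ σ̂(B)² with coefficients ψᵢ
depending only on the matrix invariants of B. -/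
def SemiInvertible (σ : Matrix (Fin 3) (Fin 3) ℝ → Matrix (Fin 3) (Fin 3) ℝ) : Prop :=
  ∃ ψ : Fin 3 → (Matrix (Fin 3) (Fin 3) ℝ → ℝ),
    (∀ k : Fin 3, ∀ B ∈ PSym3, ∀ Q : Matrix (Fin 3) (Fin 3) ℝ, IsOrthogonal Q →
      ψ k (Qᵀ * B * Q) = ψ k B) ∧
    ∀ B ∈ PSym3, B = ψ 0 B • 1 + ψ 1 B • σ B + ψ 2 B • (σ B) ^ 2

/-- The strict Baker–Ericksen inequalities. -/
def StrictBakerEricksen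
    (σ : Matrix (Fin 3) (Fin 3) ℝ → Matrix (Fin 3) (Fin 3) ℝ) : Prop :=
  ∀ B ∈ PSym3, ∀ v w : Fin 3 → ℝ, v ≠ 0 → w ≠ 0 →
    ∀ lami lamj si sj : ℝ, 0 < lami → 0 < lamj →
      B.mulVec v = (lami ^ 2) • v → (σ B).mulVec v = si • v →
      B.mulVec w = (lamj ^ 2) • w → (σ B).mulVec w = sj • w →
      lami > lamj → si > sj

/-!
dev₃ shifts every eigenvalue of `B` by the same amount `tr B / 3`, so it preserves their strict
order, and `B` is recovered from `dev₃ B` together with the orthogonal invariant `tr B`. The shift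
kills every multiple of the identity, so `I` and `2 • I` have the same image.
-/

lemma trace_transpose_mul_mul_of_isOrthogonal {n : ℕ} {Q : Matrix (Fin n) (Fin n) ℝ}
    (hQ : IsOrthogonal Q) (B : Matrix (Fin n) (Fin n) ℝ) : (Qᵀ * B * Q).trace = B.trace := by
  rw [trace_mul_cycle, hQ.1, one_mul]

lemma smul_one_mem_PSym3 {c : ℝ} (hc : 0 < c) : c • (1 : Matrix (Fin 3) (Fin 3) ℝ) ∈ PSym3 :=
  ⟨isSymm_one.smul c, PosDef.one.smul hc⟩

lemma eq_smul_one_add_dev3 (B : Matrix (Fin 3) (Fin 3) ℝ) :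
    B = ((1 / 3 : ℝ) * B.trace) • 1 + dev3 B := by
  rw [dev3, add_sub_cancel]

lemma dev3_smul_one (c : ℝ) : dev3 (c • 1) = 0 := by
  rw [dev3, sub_eq_zero, trace_smul, trace_one]
  congr 1
  simp only [Fintype.card_fin, Nat.cast_ofNat]
  ring

lemma dev3_mulVec_of_mulVec_eq_smul {B : Matrix (Fin 3) (Fin 3) ℝ} {v : Fin 3 → ℝ} {μ : ℝ}
    (hv : B *ᵥ v = μ • v) : dev3 B *ᵥ v = (μ - (1 / 3 : ℝ) * B.trace) • v := by
  rw [dev3, sub_mulVec, smul_mulVec, one_mulVec, hv, sub_smul]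

lemma dev3_eigenvalue_eq {B : Matrix (Fin 3) (Fin 3) ℝ} {v : Fin 3 → ℝ} (hv0 : v ≠ 0) {μ s : ℝ}
    (hBv : B *ᵥ v = μ • v) (hdv : dev3 B *ᵥ v = s • v) : s = μ - (1 / 3 : ℝ) * B.trace :=
  smul_left_injective ℝ hv0 (hdv.symm.trans (dev3_mulVec_of_mulVec_eq_smul hBv))

theorem dev3_strictBakerEricksen : StrictBakerEricksen dev3 := by
  intro B _ v w hv hw lami lamj si sj _ hlj hBv hdv hBw hdw hij
  rw [dev3_eigenvalue_eq hv hBv hdv, dev3_eigenvalue_eq hw hBw hdw]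
  have := pow_lt_pow_left₀ hij hlj.le two_ne_zero
  linarith

theorem dev3_semiInvertible : SemiInvertible dev3 := by
  refine ⟨![fun B => (1 / 3 : ℝ) * B.trace, fun _ => 1, fun _ => 0], ?_, ?_⟩
  · intro k B _ Q hQ
    fin_cases k
    · simp only [Fin.zero_eta, Fin.isValue, Matrix.cons_val_zero,
        trace_transpose_mul_mul_of_isOrthogonal hQ]
    · rfl
    · rfl
  · intro B _
    show B = ((1 / 3 : ℝ) * B.trace) • 1 + (1 : ℝ) • dev3 B + (0 : ℝ) • dev3 B ^ 2
    rw [one_smul, zero_smul, add_zero]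
    exact eq_smul_one_add_dev3 B

theorem dev3_not_injOn_PSym3 :
    ¬ ∀ B₁ ∈ PSym3, ∀ B₂ ∈ PSym3, dev3 B₁ = dev3 B₂ → B₁ = B₂ := by
  intro h
  have hdev : dev3 ((1 : ℝ) • 1) = dev3 ((2 : ℝ) • 1) := by rw [dev3_smul_one, dev3_smul_one]
  have h12 := h _ (smul_one_mem_PSym3 one_pos) _ (smul_one_mem_PSym3 two_pos) hdev
  have := congrFun (congrFun h12 0) 0
  norm_num at this

/-- σ̂(B) = dev₃ B satisfies the strict Baker–Ericksen
inequalities and is semi-invertible (indeed B = (1/3) tr(B) I + σ̂(B)),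
but it is not injective on PSym(3). -/
theorem dev3_strictBE_semiInvertible_not_injective :
    StrictBakerEricksen dev3 ∧
    (∀ B : Matrix (Fin 3) (Fin 3) ℝ, B = ((1 / 3 : ℝ) * B.trace) • 1 + dev3 B) ∧
    SemiInvertible dev3 ∧
    ¬ (∀ B₁ ∈ PSym3, ∀ B₂ ∈ PSym3, dev3 B₁ = dev3 B₂ → B₁ = B₂) :=
  ⟨dev3_strictBakerEricksen, eq_smul_one_add_dev3, dev3_semiInvertible, dev3_not_injOn_PSym3⟩
end

section
/- If an isotropic function σ̂: PSym(3) → Sym(3), written as σ̂(B) = β₀ I + β₁ B + β_{−1} B^{−1}, satisfies the weak empirical inequalities (for every B ∈ PSym(3) not a positive multiple of the identity: β_{−1}(B) ≤ 0 and β₁(B) ≥ 0, with at least one inequality strict), then σ̂ satisfies the strict Baker–Ericksen inequalities: λᵢ > λⱼ implies σᵢ > σⱼ for the corresponding eigenvalues. -/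
open Matrix

/-- If an isotropic function σ̂(B) = β₀ I + β₁ B + β₋₁ B⁻¹ on
PSym(3) satisfies the weak empirical inequalities (β₋₁ ≤ 0 and β₁ ≥ 0, with
one inequality strict, for every B that is not a positive multiple of the
identity), then σ̂ satisfies the strict Baker–Ericksen inequalities. -/
theorem weak_empirical_implies_strictBE
    (σ : Matrix (Fin 3) (Fin 3) ℝ → Matrix (Fin 3) (Fin 3) ℝ)
    (β₀ β₁ βm : Matrix (Fin 3) (Fin 3) ℝ → ℝ)
    (hσsym : ∀ B ∈ PSym3, (σ B).IsSymm)
    (hσiso : ∀ B ∈ PSym3, ∀ Q : Matrix (Fin 3) (Fin 3) ℝ, IsOrthogonal Q →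
      σ (Qᵀ * B * Q) = Qᵀ * σ B * Q)
    (hrep : ∀ B ∈ PSym3, σ B = β₀ B • 1 + β₁ B • B + βm B • B⁻¹)
    (hWE : ∀ B ∈ PSym3, (¬ ∃ c : ℝ, 0 < c ∧ B = c • 1) →
      βm B ≤ 0 ∧ 0 ≤ β₁ B ∧ (βm B < 0 ∨ 0 < β₁ B)) :
    StrictBakerEricksen σ := by
  intro B hB v w hv hw lami lamj si sj hli hlj hBv hσv hBw hσw hgt
  obtain ⟨hBsymm, hBpd⟩ := hB
  have hdet : IsUnit B.det := isUnit_iff_ne_zero.mpr hBpd.det_pos.ne'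
  have hinv : B⁻¹ * B = 1 := nonsing_inv_mul B hdet
  have key : ∀ (u : Fin 3 → ℝ) (l s : ℝ), u ≠ 0 → 0 < l →
      B.mulVec u = (l ^ 2) • u → (σ B).mulVec u = s • u →
      s = β₀ B + β₁ B * l ^ 2 + βm B * (l ^ 2)⁻¹ := by
    intro u l s hu hl hBu hσu
    have hl2 : (0:ℝ) < l ^ 2 := by positivity
    have hBinvu : B⁻¹.mulVec u = (l ^ 2)⁻¹ • u := by
      have h1 : B⁻¹.mulVec (B.mulVec u) = u := by
        rw [mulVec_mulVec, hinv, one_mulVec]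
      rw [hBu, mulVec_smul] at h1
      have h2 : (l ^ 2)⁻¹ • ((l ^ 2 : ℝ) • B⁻¹.mulVec u) = (l ^ 2)⁻¹ • u := by rw [h1]
      rwa [smul_smul, inv_mul_cancel₀ hl2.ne', one_smul] at h2
    have hσu2 : (σ B).mulVec u = (β₀ B + β₁ B * l ^ 2 + βm B * (l ^ 2)⁻¹) • u := by
      rw [hrep B ⟨hBsymm, hBpd⟩, add_mulVec, add_mulVec, smul_mulVec,
        smul_mulVec, smul_mulVec, one_mulVec, hBu, hBinvu]
      ext k
      simp [smul_smul, mul_add, add_mul]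
    rw [hσu] at hσu2
    obtain ⟨k, hk⟩ := Function.ne_iff.mp hu
    have h3 := congrFun hσu2 k
    simp only [Pi.smul_apply, smul_eq_mul] at h3
    exact mul_right_cancel₀ hk h3
  have hsi := key v lami si hv hli hBv hσv
  have hsj := key w lamj sj hw hlj hBw hσw
  have hne : ¬ ∃ c : ℝ, 0 < c ∧ B = c • 1 := by
    rintro ⟨c, hc, hBc⟩
    rw [hBc, smul_mulVec, one_mulVec] at hBv hBw
    obtain ⟨k, hk⟩ := Function.ne_iff.mp hv
    obtain ⟨m, hm⟩ := Function.ne_iff.mp hw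
    have h1 := congrFun hBv k
    have h2 := congrFun hBw m
    simp only [Pi.smul_apply, smul_eq_mul] at h1 h2
    have e1 : c = lami ^ 2 := mul_right_cancel₀ hk h1
    have e2 : c = lamj ^ 2 := mul_right_cancel₀ hm h2
    nlinarith
  obtain ⟨hbm, hb1, hstrict⟩ := hWE B ⟨hBsymm, hBpd⟩ hne
  have hl2 : lamj ^ 2 < lami ^ 2 := by nlinarith
  have hinv2 : (lami ^ 2)⁻¹ < (lamj ^ 2)⁻¹ := by
    apply inv_strictAnti₀ (by positivity) hl2
  rcases hstrict with h | h
  · nlinarith [mul_le_mul_of_nonneg_left hl2.le hb1,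
      mul_lt_mul_of_neg_left hinv2 h]
  · nlinarith [mul_lt_mul_of_pos_left hl2 h,
      mul_le_mul_of_nonpos_left hinv2.le hbm]
end
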